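/- arXiv:2303.04372 — 2 statements merged into one kernel-verified Lean document; each statement's English description precedes it below -/
import Mathlib

section
/- Let R be a unital ring, G a finite group whose order n is invertible in R, and σ, τ unital R-algebra endomorphisms of the group ring RG. Then every (σ,τ)-derivation D of RG is inner: setting γ = (1/n)·Σ_{g∈G} D(g⁻¹)·τ(g), one has D(α) = γ·τ(α) − σ(α)·γ for all α ∈ RG. -/
/-!
Averaging the twisted Leibniz rule over the group gives `γ τ(h) = |G| D(h) + σ(h) γ` for every
`h ∈ G`, where `γ = Σ_g D(g⁻¹) τ(g)`: expanding `D(h g⁻¹)` and reindexing `g ↦ g h` makes the sum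
reappear. Scalars `r ∈ R` are killed by `D` (it is `R`-linear and `D 1 = 0`) and commute with `G`,
hence pass through `γ`. So `|G| • D` and the inner derivation of `γ` agree on generators of `RG`,
hence everywhere, and dividing by `|G|` finishes the proof.
-/

open MonoidAlgebra

def IsTwistedDerivation {A B : Type*} [Ring A] [Ring B] (σ τ : A →+* B) (D : A → B) : Prop :=
  ∀ x y, D (x * y) = D x * τ y + σ x * D y

def innerTwistedDerivation {A B : Type*} [Ring A] [Ring B] (σ τ : A →+* B) (γ : B) : A →+ B :=
  (AddMonoidHom.mulLeft γ).comp τ.toAddMonoidHom - (AddMonoidHom.mulRight γ).comp σ.toAddMonoidHom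

section TwistedDerivation

variable {A B : Type*} [Ring A] [Ring B] {σ τ : A →+* B}

@[simp]
theorem innerTwistedDerivation_apply (γ : B) (x : A) :
    innerTwistedDerivation σ τ γ x = γ * τ x - σ x * γ :=
  rfl

theorem isTwistedDerivation_innerTwistedDerivation (γ : B) :
    IsTwistedDerivation σ τ (innerTwistedDerivation σ τ γ) := by
  intro x y
  simp only [innerTwistedDerivation_apply, map_mul]
  noncomm_ring

namespace IsTwistedDerivation

variable {D : A → B}

theorem nsmul (hD : IsTwistedDerivation σ τ D) (n : ℕ) : IsTwistedDerivation σ τ (n • D) := by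
  intro x y
  simp only [Pi.smul_apply, hD x y, smul_add, smul_mul_assoc, mul_smul_comm]

theorem map_one_eq_zero (hD : IsTwistedDerivation σ τ D) : D 1 = 0 := by
  have h := hD 1 1
  simp only [mul_one, map_one, one_mul] at h
  exact left_eq_add.mp h

theorem mul_map_eq_map_mul_of_commute (hD : IsTwistedDerivation σ τ D) {c x : A}
    (hcx : Commute c x) (hc : D c = 0) : D x * τ c = σ c * D x := by
  have hxc := hD x c
  have hcx' := hD c x
  rw [hc, mul_zero, add_zero] at hxc
  rw [hc, zero_mul, zero_add, hcx.eq] at hcx'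
  rw [← hxc, hcx']

theorem sum_mul_map_eq_map_mul_sum_of_commute (hD : IsTwistedDerivation σ τ D) {ι : Type*}
    (s : Finset ι) (x y : ι → A) {c : A} (hcx : ∀ i, Commute c (x i)) (hcy : ∀ i, Commute c (y i))
    (hc : D c = 0) :
    (∑ i ∈ s, D (x i) * τ (y i)) * τ c = σ c * ∑ i ∈ s, D (x i) * τ (y i) := by
  rw [Finset.sum_mul, Finset.mul_sum]
  refine Finset.sum_congr rfl fun i _ => ?_
  rw [mul_assoc, ← map_mul, ← (hcy i).eq, map_mul, ← mul_assoc,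
    hD.mul_map_eq_map_mul_of_commute (hcx i) hc, mul_assoc]

theorem sum_mul_map_of_group (hD : IsTwistedDerivation σ τ D) {G : Type*} [Group G] [Fintype G]
    (φ : G →* A) (h : G) :
    (∑ g, D (φ g⁻¹) * τ (φ g)) * τ (φ h) =
      Fintype.card G • D (φ h) + σ (φ h) * ∑ g, D (φ g⁻¹) * τ (φ g) := by
  have hterm (g : G) :
      D (φ (h * g⁻¹)) * τ (φ g) = D (φ h) + σ (φ h) * (D (φ g⁻¹) * τ (φ g)) := by
    rw [map_mul, hD, add_mul, mul_assoc, ← map_mul τ, ← map_mul φ, inv_mul_cancel, map_one,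
      map_one, mul_one, mul_assoc]
  calc (∑ g, D (φ g⁻¹) * τ (φ g)) * τ (φ h)
      = ∑ g, D (φ (h * (g * h)⁻¹)) * τ (φ (g * h)) := by
        rw [Finset.sum_mul]
        refine Finset.sum_congr rfl fun g _ => ?_
        rw [mul_inv_rev, mul_inv_cancel_left, mul_assoc, ← map_mul τ, ← map_mul φ]
    _ = ∑ g, D (φ (h * g⁻¹)) * τ (φ g) := Fintype.sum_equiv (Equiv.mulRight h) _ _ fun _ => rfl
    _ = Fintype.card G • D (φ h) + σ (φ h) * ∑ g, D (φ g⁻¹) * τ (φ g) := by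
        simp only [hterm, Finset.sum_add_distrib, Finset.sum_const, Finset.card_univ,
          Finset.mul_sum]

end IsTwistedDerivation

end TwistedDerivation

namespace MonoidAlgebra

variable {k G B : Type*} [Ring k] [Ring B]

theorem single_one_eq_smul_one [Monoid G] (r : k) : (single 1 r : k[G]) = r • 1 := by
  rw [one_def, smul_single', mul_one]

theorem commute_single_one_of [Monoid G] (r : k) (g : G) : Commute (single 1 r) (of k G g) :=
  single_commute_single (Commute.one_left g) (Commute.one_right r)

theorem isTwistedDerivation_ext [Monoid G] {σ τ : k[G] →+* B} {D₁ D₂ : k[G] →+ B}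
    (h₁ : IsTwistedDerivation σ τ D₁) (h₂ : IsTwistedDerivation σ τ D₂)
    (hscalar : ∀ r, D₁ (single 1 r) = D₂ (single 1 r))
    (hof : ∀ g, D₁ (of k G g) = D₂ (of k G g)) : D₁ = D₂ := by
  refine addMonoidHom_ext fun g r => ?_
  have hsingle : single g r = single 1 r * of k G g := by simp
  rw [hsingle, h₁, h₂, hscalar, hof]

theorem card_nsmul_eq_innerTwistedDerivation [Group G] [Fintype G] {σ τ : k[G] →+* B}
    {D : k[G] →+ B} (hD : IsTwistedDerivation σ τ D) (hscalar : ∀ r, D (single 1 r) = 0) :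
    Fintype.card G • D = innerTwistedDerivation σ τ (∑ g, D (of k G g⁻¹) * τ (of k G g)) := by
  refine isTwistedDerivation_ext (hD.nsmul _) (isTwistedDerivation_innerTwistedDerivation _)
    (fun r => ?_) (fun g => ?_)
  · rw [innerTwistedDerivation_apply,
      hD.sum_mul_map_eq_map_mul_sum_of_commute _ _ _ (fun g => commute_single_one_of r g⁻¹)
        (commute_single_one_of r) (hscalar r),
      sub_self, AddMonoidHom.smul_apply, hscalar, smul_zero]
  · rw [innerTwistedDerivation_apply, hD.sum_mul_map_of_group (of k G) g, add_sub_cancel_right,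
      AddMonoidHom.smul_apply]

end MonoidAlgebra

theorem stmt_8 {R : Type*} [Ring R] {G : Type*} [Group G] [Fintype G]
    (u : Rˣ) (hu : (u : R) = (Fintype.card G : R))
    (σ τ : MonoidAlgebra R G →+* MonoidAlgebra R G)
    (D : MonoidAlgebra R G →ₗ[R] MonoidAlgebra R G)
    (hD : ∀ x y : MonoidAlgebra R G, D (x * y) = D x * τ y + σ x * D y) :
    ∀ α : MonoidAlgebra R G,
      D α = ((↑u⁻¹ : R) • ∑ g : G, D (of R G g⁻¹) * τ (of R G g)) * τ α -
        σ α * ((↑u⁻¹ : R) • ∑ g : G, D (of R G g⁻¹) * τ (of R G g)) := by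
  intro α
  have hD' : IsTwistedDerivation σ τ D := hD
  have hscalar (r : R) : D (single 1 r) = 0 := by
    rw [single_one_eq_smul_one, map_smul, hD'.map_one_eq_zero, smul_zero]
  have hinner := DFunLike.congr_fun
    (card_nsmul_eq_innerTwistedDerivation (D := D.toAddMonoidHom) hD' hscalar) α
  set γ := ∑ g : G, D (of R G g⁻¹) * τ (of R G g)
  have hcancel (z : MonoidAlgebra R G) : (↑u⁻¹ : R) • (Fintype.card G • z) = z := by
    rw [← Nat.cast_smul_eq_nsmul R, smul_smul, ← hu, Units.inv_mul, one_smul]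
  have hγ : Fintype.card G • (↑u⁻¹ : R) • γ = γ := by
    rw [← Nat.cast_smul_eq_nsmul R, smul_smul, ← hu, Units.mul_inv, one_smul]
  calc D α = (↑u⁻¹ : R) • (Fintype.card G • D α) := (hcancel _).symm
    _ = (↑u⁻¹ : R) • (γ * τ α - σ α * γ) := congrArg _ hinner
    _ = (↑u⁻¹ : R) • (Fintype.card G • (((↑u⁻¹ : R) • γ) * τ α - σ α * ((↑u⁻¹ : R) • γ))) := by
      conv_lhs => rw [← hγ]
      rw [smul_mul_assoc (Fintype.card G), mul_smul_comm (Fintype.card G), ← smul_sub]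
    _ = ((↑u⁻¹ : R) • γ) * τ α - σ α * ((↑u⁻¹ : R) • γ) := hcancel _
end

section
/- Let R be a commutative unital ring, G a group, and σ, τ group endomorphisms of G extended R-linearly to algebra endomorphisms of the group ring RG. For each (σ,τ)-conjugacy class C of G of finite size, let Ĉ = Σ_{g∈C} g ∈ RG be its class sum. Then the class sums of the finite (σ,τ)-conjugacy classes form an R-basis of the (σ,τ)-center Z_{(σ,τ)}(RG) = {z ∈ RG : z·τ(α) = σ(α)·z for all α ∈ RG}. -/
/-- The (σ,τ)-center `{z ∈ RG : z·τ(α) = σ(α)·z for all α}` as an `R`-submodule. -/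
def sigmaTauCenter (R : Type*) (G : Type*) [CommRing R] [Group G]
    (σ' τ' : MonoidAlgebra R G →ₐ[R] MonoidAlgebra R G) :
    Submodule R (MonoidAlgebra R G) where
  carrier := {z | ∀ α : MonoidAlgebra R G, z * τ' α = σ' α * z}
  add_mem' := by
    intro a b ha hb α
    rw [add_mul, mul_add, ha α, hb α]
  zero_mem' := by intro α; simp
  smul_mem' := by
    intro c a ha α
    rw [smul_mul_assoc, mul_smul_comm, ha α]

/-!
An element `z` of `RG` lies in the `(σ,τ)`-center iff `z · τ g = σ g · z` for every `g ∈ G`,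
that is, iff its coefficient function is constant on `(σ,τ)`-conjugacy classes. A finitely
supported function that is constant on the classes of an equivalence relation vanishes on the
infinite classes, and is the unique linear combination of the indicators of the finite classes
whose coefficients are its values on them.
-/

namespace Setoid

variable {α : Type*} (s : Setoid α) (R : Type*) [Semiring R]

def invariantFinsupp : Submodule R (α →₀ R) where
  carrier := {f | ∀ x y, s x y → f x = f y}
  add_mem' hf hg x y h := by simp only [Finsupp.add_apply, hf x y h, hg x y h]
  zero_mem' _ _ _ := rfl
  smul_mem' c f hf x y h := by simp only [Finsupp.smul_apply, hf x y h]

variable {s R}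

lemma apply_eq_of_mem_invariantFinsupp {f : α →₀ R} (hf : f ∈ s.invariantFinsupp R)
    {C : Set α} (hC : C ∈ s.classes) {x y : α} (hx : x ∈ C) (hy : y ∈ C) : f x = f y :=
  hf x y (s.rel_iff_exists_classes.2 ⟨C, hC, hx, hy⟩)

lemma finite_class_of_mem_invariantFinsupp {f : α →₀ R} (hf : f ∈ s.invariantFinsupp R)
    {x : α} (hx : f x ≠ 0) : {y | s y x}.Finite :=
  f.support.finite_toSet.subset fun y hy => by simpa [hf y x hy] using hx

def FiniteClass := {C : Set α // C ∈ s.classes ∧ C.Finite}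

namespace FiniteClass

noncomputable def indicator (C : s.FiniteClass) : α →₀ R :=
  ∑ x ∈ C.2.2.toFinset, Finsupp.single x 1

open Classical in
lemma indicator_apply (C : s.FiniteClass) (x : α) :
    (C.indicator x : R) = if x ∈ C.1 then 1 else 0 := by
  simp [indicator, Finsupp.finsetSum_apply, Finsupp.single_apply]

lemma eq_of_mem {C D : s.FiniteClass} {x : α} (hC : x ∈ C.1) (hD : x ∈ D.1) : C = D :=
  Subtype.ext (eq_of_mem_classes C.2.1 hC D.2.1 hD)

noncomputable def rep (C : s.FiniteClass) : α := C.2.1.choose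

lemma rep_mem (C : s.FiniteClass) : C.rep ∈ C.1 := by
  rw [C.2.1.choose_spec]
  exact s.refl _

end FiniteClass

open FiniteClass

lemma linearCombination_indicator_apply (l : s.FiniteClass →₀ R) {C : s.FiniteClass} {x : α}
    (hx : x ∈ C.1) : Finsupp.linearCombination R indicator l x = l C := by
  classical
  rw [Finsupp.linearCombination_apply, Finsupp.sum, Finsupp.finsetSum_apply,
    Finset.sum_eq_single C (fun D _ hDC => ?_) (fun hC => ?_)]
  · simp [indicator_apply, hx]
  · rw [Finsupp.smul_apply, indicator_apply, if_neg fun hD => hDC (eq_of_mem hD hx), smul_zero]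
  · simp [Finsupp.notMem_support_iff.mp hC]

lemma linearIndependent_indicator : LinearIndependent R (indicator : s.FiniteClass → α →₀ R) :=
  fun l l' h => Finsupp.ext fun C => by
    rw [← linearCombination_indicator_apply l C.rep_mem, h,
      linearCombination_indicator_apply l' C.rep_mem]

lemma mem_span_indicator {f : α →₀ R} (hf : f ∈ s.invariantFinsupp R) :
    f ∈ Submodule.span R (Set.range (indicator : s.FiniteClass → α →₀ R)) := by
  classical
  let S : Finset s.FiniteClass := f.support.attach.image fun x : {x // x ∈ f.support} =>
    ⟨{y | s y x}, s.mem_classes x,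
      finite_class_of_mem_invariantFinsupp hf (Finsupp.mem_support_iff.1 x.2)⟩
  let l : s.FiniteClass →₀ R := Finsupp.onFinset S (fun C => f C.rep) fun C hC =>
    Finset.mem_image.2 ⟨⟨C.rep, Finsupp.mem_support_iff.2 hC⟩, Finset.mem_attach _ _,
      eq_of_mem (s.refl C.rep) C.rep_mem⟩
  refine Finsupp.mem_span_range_iff_exists_finsupp.2 ⟨l, Finsupp.ext fun y => ?_⟩
  rw [← Finsupp.linearCombination_apply]
  by_cases hy : f y = 0
  · rw [hy, Finsupp.linearCombination_apply, Finsupp.sum, Finsupp.finsetSum_apply]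
    refine Finset.sum_eq_zero fun C _ => ?_
    rw [Finsupp.smul_apply, indicator_apply]
    split_ifs with hyC
    · rw [Finsupp.onFinset_apply, apply_eq_of_mem_invariantFinsupp hf C.2.1 C.rep_mem hyC, hy,
        zero_smul]
    · exact smul_zero _
  · let C : s.FiniteClass :=
      ⟨{z | s z y}, s.mem_classes y, finite_class_of_mem_invariantFinsupp hf hy⟩
    rw [linearCombination_indicator_apply l (show y ∈ C.1 from s.refl y), Finsupp.onFinset_apply,
      apply_eq_of_mem_invariantFinsupp hf C.2.1 C.rep_mem (s.refl y)]

lemma indicator_mem_invariantFinsupp (C : s.FiniteClass) : C.indicator ∈ s.invariantFinsupp R :=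
  fun x y hxy => by
    classical
    have hC : x ∈ C.1 ↔ y ∈ C.1 := by
      obtain ⟨z, hz⟩ := C.2.1
      rw [hz]
      exact ⟨fun h => s.trans (s.symm hxy) h, fun h => s.trans hxy h⟩
    simp only [indicator_apply, hC]

lemma span_indicator :
    Submodule.span R (Set.range (indicator : s.FiniteClass → α →₀ R)) = s.invariantFinsupp R :=
  le_antisymm (Submodule.span_le.2 (Set.range_subset_iff.2 indicator_mem_invariantFinsupp))
    fun _ => mem_span_indicator

variable (s R) in
noncomputable def finiteClassBasis : Module.Basis s.FiniteClass R (s.invariantFinsupp R) :=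
  (Module.Basis.span linearIndependent_indicator).map (LinearEquiv.ofEq _ _ span_indicator)

@[simp]
lemma coe_finiteClassBasis_apply (C : s.FiniteClass) :
    (finiteClassBasis s R C : α →₀ R) = C.indicator := by
  simp [finiteClassBasis, Module.Basis.span_apply]

end Setoid

section TwistedConjugacy

variable {R G : Type*} [CommRing R] [Group G]

def twistedConj (σ τ : G →* G) : Setoid G where
  r z x := ∃ g, z = σ g * x * (τ g)⁻¹
  iseqv := by
    refine ⟨fun x => ⟨1, by simp⟩, ?_, ?_⟩
    · rintro _ x ⟨g, rfl⟩
      exact ⟨g⁻¹, by simp [mul_assoc]⟩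
    · rintro _ _ x ⟨g, rfl⟩ ⟨k, rfl⟩
      exact ⟨g * k, by simp [mul_assoc]⟩

lemma mem_sigmaTauCenter_iff_forall_of (φ ψ : MonoidAlgebra R G →ₐ[R] MonoidAlgebra R G)
    (z : MonoidAlgebra R G) :
    z ∈ sigmaTauCenter R G φ ψ ↔
      ∀ g, z * ψ (MonoidAlgebra.of R G g) = φ (MonoidAlgebra.of R G g) * z := by
  refine ⟨fun h g => h _, fun h α => ?_⟩
  induction α using MonoidAlgebra.induction_linear with
  | zero => simp
  | add a b ha hb => rw [map_add, map_add, mul_add, add_mul, ha, hb]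
  | single g r =>
    rw [show MonoidAlgebra.single g r = r • MonoidAlgebra.of R G g by simp, map_smul, map_smul,
      mul_smul_comm, smul_mul_assoc]
    exact congrArg (r • ·) (h g)

lemma mul_single_one_eq_single_one_mul_iff (z : MonoidAlgebra R G) (g h : G) :
    z * MonoidAlgebra.single h 1 = MonoidAlgebra.single g 1 * z ↔
      ∀ x, z.coeff (g * x * h⁻¹) = z.coeff x := by
  simp only [MonoidAlgebra.ext_iff, Finsupp.ext_iff, MonoidAlgebra.coeff_mul_single_apply,
    MonoidAlgebra.coeff_single_mul_apply, mul_one, one_mul]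
  refine ⟨fun hz x => by simpa using hz (g * x), fun hz y => ?_⟩
  simpa [mul_assoc] using hz (g⁻¹ * y)

lemma mem_sigmaTauCenter_iff (σ τ : G →* G) (z : MonoidAlgebra R G) :
    z ∈ sigmaTauCenter R G (MonoidAlgebra.mapDomainAlgHom R R σ)
        (MonoidAlgebra.mapDomainAlgHom R R τ) ↔
      z.coeff ∈ (twistedConj σ τ).invariantFinsupp R := by
  simp only [mem_sigmaTauCenter_iff_forall_of, MonoidAlgebra.mapDomainAlgHom_apply,
    MonoidAlgebra.of_apply, MonoidAlgebra.mapDomain_single, mul_single_one_eq_single_one_mul_iff]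
  constructor
  · rintro h _ x ⟨g, rfl⟩
    exact h g x
  · exact fun h g x => h _ _ ⟨g, rfl⟩

lemma sigmaTauCenter_eq_map_invariantFinsupp (σ τ : G →* G) :
    sigmaTauCenter R G (MonoidAlgebra.mapDomainAlgHom R R σ)
        (MonoidAlgebra.mapDomainAlgHom R R τ) =
      ((twistedConj σ τ).invariantFinsupp R).map
        (MonoidAlgebra.coeffLinearEquiv (S := R) (M := G) R).symm.toLinearMap := by
  ext z
  rw [Submodule.mem_map_equiv, mem_sigmaTauCenter_iff]
  rfl

variable (R) in
noncomputable def classSumBasis (σ τ : G →* G) :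
    Module.Basis (twistedConj σ τ).FiniteClass R
      (sigmaTauCenter R G (MonoidAlgebra.mapDomainAlgHom R R σ)
        (MonoidAlgebra.mapDomainAlgHom R R τ)) :=
  ((twistedConj σ τ).finiteClassBasis R).map
    (LinearEquiv.ofSubmodules _ _ _ (sigmaTauCenter_eq_map_invariantFinsupp σ τ).symm)

lemma coe_classSumBasis_apply (σ τ : G →* G) (C : (twistedConj σ τ).FiniteClass) :
    (classSumBasis R σ τ C : MonoidAlgebra R G) =
      ∑ g ∈ C.2.2.toFinset, MonoidAlgebra.of R G g := by
  rw [classSumBasis, Module.Basis.map_apply, LinearEquiv.ofSubmodules_apply,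
    Setoid.coe_finiteClassBasis_apply, Setoid.FiniteClass.indicator, map_sum]
  simp

end TwistedConjugacy

theorem stmt_14 {R G : Type*} [CommRing R] [Group G] (σ τ : G →* G) :
    ∃ b : Module.Basis
        {C : Set G // (∃ x : G, C = {z : G | ∃ g : G, z = σ g * x * (τ g)⁻¹}) ∧ C.Finite} R
        (sigmaTauCenter R G (MonoidAlgebra.mapDomainAlgHom R R σ)
          (MonoidAlgebra.mapDomainAlgHom R R τ)),
      ∀ i, (b i : MonoidAlgebra R G) =
        ∑ g ∈ i.prop.2.toFinset, MonoidAlgebra.of R G g := by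
  exact ⟨classSumBasis R σ τ, coe_classSumBasis_apply σ τ⟩
end
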